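/- arXiv:0810.2758 — 2 statements merged into one kernel-verified Lean document; each statement's English description precedes it below -/
import Mathlib

section
/- For γ > 0 and natural numbers α, n: ∫₀^∞ x^{γ−1} Lₙ^α(x) e^{−x} dx = Γ(γ) Γ(1+α−γ+n) / (n! Γ(1+α−γ)), where Lₙ^α(x) = Σ_{l=0}^{n} (−1)^l C(n+α, n−l) x^l / l! is the associated Laguerre polynomial. -/
/-!
Integrating termwise, the monomial `x ^ l` contributes `Γ(γ + l) = Γ(γ) (γ)ₗ`, and
`(-1)ˡ (γ)ₗ / l! = C(-γ, l)`. The sum thus becomes the Chu–Vandermonde convolution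
`∑ₗ C(n + α, n - l) C(-γ, l) = C(n + α - γ, n)`, a Pochhammer product divided by `n!`.
-/

open Finset Polynomial MeasureTheory

theorem ascPochhammer_eval_eq_prod_range {R : Type*} [CommSemiring R] (n : ℕ) (r : R) :
    (ascPochhammer R n).eval r = ∏ j ∈ range n, (r + j) := by
  induction n with
  | zero => simp
  | succ n ih => simp [ascPochhammer_succ_right, ih, prod_range_succ]

section Binomial

variable {K : Type*} [Field K] [CharZero K]

theorem Ring.choose_eq_ascPochhammer_div (a : K) (n : ℕ) :
    Ring.choose a n = (ascPochhammer K n).eval (a - n + 1) / n.factorial := by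
  rw [Ring.choose_eq_smul, descPochhammer_smeval_eq_ascPochhammer,
    ascPochhammer_smeval_eq_eval, smul_eq_mul, inv_mul_eq_div]

theorem Ring.choose_neg_eq_ascPochhammer (a : K) (n : ℕ) :
    Ring.choose (-a) n = (-1) ^ n * (ascPochhammer K n).eval a / n.factorial := by
  rw [Ring.choose_eq_ascPochhammer_div, ← descPochhammer_eval_eq_ascPochhammer,
    ← neg_neg a, ascPochhammer_eval_neg_eq_descPochhammer, neg_neg, ← mul_assoc, ← pow_add,
    Even.neg_one_pow ⟨n, rfl⟩, one_mul]

theorem Ring.sum_range_natChoose_mul_choose_neg (a : K) (N n : ℕ) :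
    ∑ l ∈ range (n + 1), (N.choose (n - l) : K) * Ring.choose (-a) l =
      Ring.choose (N - a) n := by
  rw [sub_eq_neg_add, Ring.add_choose_eq n (Commute.all _ _),
    Nat.sum_antidiagonal_eq_sum_range_succ (fun i j => Ring.choose (-a) i * Ring.choose (N : K) j)]
  simp only [Ring.choose_natCast, mul_comm]

end Binomial

theorem Real.Gamma_add_nat_eq_mul_ascPochhammer {s : ℝ} (hs : ∀ k : ℕ, s + k ≠ 0) (n : ℕ) :
    Real.Gamma (s + n) = Real.Gamma s * (ascPochhammer ℝ n).eval s := by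
  induction n with
  | zero => simp
  | succ n ih =>
    rw [Nat.cast_succ, ← add_assoc, Real.Gamma_add_one (hs n), ih, ascPochhammer_succ_eval]
    ring

theorem integral_Ioi_rpow_mul_sum_mul_exp_neg {γ : ℝ} (hγ : 0 < γ) (s : Finset ℕ)
    (c : ℕ → ℝ) :
    ∫ x in Set.Ioi (0 : ℝ), x ^ (γ - 1) * (∑ l ∈ s, c l * x ^ l) * Real.exp (-x) =
      ∑ l ∈ s, c l * Real.Gamma (γ + l) := by
  have hterm : ∀ x ∈ Set.Ioi (0 : ℝ),
      x ^ (γ - 1) * (∑ l ∈ s, c l * x ^ l) * Real.exp (-x) =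
      ∑ l ∈ s, c l * (Real.exp (-x) * x ^ (γ + l - 1)) := by
    intro x hx
    simp only [mul_sum, sum_mul]
    refine sum_congr rfl fun l _ => ?_
    rw [add_sub_right_comm, Real.rpow_add hx, Real.rpow_natCast]
    ring
  have hγl (l : ℕ) : 0 < γ + l := by positivity
  rw [setIntegral_congr_fun measurableSet_Ioi hterm,
    integral_finsetSum _ fun l _ => (Real.GammaIntegral_convergent (hγl l)).const_mul _]
  simp only [integral_const_mul, Real.Gamma_eq_integral (hγl _)]

/-- the Laguerre integral
`∫₀^∞ x^{γ−1} Lₙ^α(x) e^{−x} dx = Γ(γ) Γ(1+α−γ+n)/(n! Γ(1+α−γ))`, where the ratio of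
Gamma functions is expressed as the product `∏_{j=0}^{n−1} (1+α−γ+j)` to avoid poles. -/
theorem stmt9 (γ : ℝ) (hγ : 0 < γ) (α n : ℕ) :
    (∫ x in Set.Ioi (0 : ℝ), x ^ (γ - 1) *
        (∑ l ∈ Finset.range (n + 1),
          (-1 : ℝ) ^ l * (Nat.choose (n + α) (n - l) : ℝ) * x ^ l / (Nat.factorial l : ℝ)) *
        Real.exp (-x)) =
      Real.Gamma γ * (∏ j ∈ Finset.range n, (1 + (α : ℝ) - γ + (j : ℝ))) /
        (Nat.factorial n : ℝ) := by
  have hGamma := Real.Gamma_add_nat_eq_mul_ascPochhammer (s := γ) fun k => by positivity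
  calc _ = ∑ l ∈ range (n + 1),
          (-1) ^ l * ((n + α).choose (n - l) : ℝ) / l.factorial * Real.Gamma (γ + l) := by
        simp only [mul_div_right_comm _ (_ ^ _ : ℝ)]
        exact integral_Ioi_rpow_mul_sum_mul_exp_neg hγ _ _
    _ = Real.Gamma γ *
          ∑ l ∈ range (n + 1), ((n + α).choose (n - l) : ℝ) * Ring.choose (-γ) l := by
        simp only [hGamma, Ring.choose_neg_eq_ascPochhammer, mul_sum]
        refine sum_congr rfl fun l _ => by ring
    _ = Real.Gamma γ * Ring.choose (((n + α : ℕ) : ℝ) - γ) n := by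
        rw [Ring.sum_range_natChoose_mul_choose_neg]
    _ = _ := by
        rw [Ring.choose_eq_ascPochhammer_div, ascPochhammer_eval_eq_prod_range]
        push_cast
        ring_nf
end

section
/- Let E be a normalized POVM on the circle 𝕋 with values in L(H), H = ℓ²(ℕ), covariant under the number representation U(t)|n⟩ = tⁿ|n⟩ (i.e. U(t)E(X)U(t)* = E(tX)). Then for all m, n ∈ ℕ, the matrix element function X ↦ ⟨m, E(X) n⟩ equals c_{m,n} ∫_X t^{m−n} dt for some constant c_{m,n} ∈ ℂ with c_{n,n} = 1, where dt is normalized Haar measure on 𝕋. -/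
open MeasureTheory ContinuousLinearMap
open scoped InnerProductSpace ComplexOrder

/-!
Conjugation by `U t` multiplies the matrix element `ν X = ⟪e m, E X (e n)⟫` by the character
`χ t = t ^ (m - n)` when `X` is translated by `t`. By polarization, `ν = ∑ k, a k • ρ k` for
four finite positive measures `ρ k`. Averaging `ν X = χ s * ν (s⁻¹ X)` over `s` against Haar
measure and exchanging the integrals gives `ν X = (∑ k, a k * ∫ χ⁻¹ ∂ρ k) * ∫ t in X, χ t`.
For `m = n` the character is trivial, and `X = univ` gives `c n n = ⟪e n, e n⟫ = 1`.
-/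

theorem exists_isFiniteMeasure_eq_measureReal {α : Type*} [MeasurableSpace α] (f : Set α → ℂ)
    (hf_nonneg : ∀ X, MeasurableSet X → 0 ≤ f X)
    (hf_sum : ∀ g : ℕ → Set α, (∀ i, MeasurableSet (g i)) → Pairwise (Function.onFun Disjoint g) →
      HasSum (fun i => f (g i)) (f (⋃ i, g i))) :
    ∃ ρ : Measure α, IsFiniteMeasure ρ ∧ ∀ X, MeasurableSet X → f X = ρ.real X := by
  have hf_empty : f ∅ = 0 := by
    have h := hf_sum (fun _ => ∅) (fun _ => .empty) (fun _ _ _ => disjoint_bot_left)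
    rw [Set.iUnion_empty] at h
    exact tendsto_nhds_unique tendsto_const_nhds h.summable.tendsto_atTop_zero
  have hf_re : ∀ X, MeasurableSet X → 0 ≤ (f X).re := fun X hX =>
    (Complex.nonneg_iff.mp (hf_nonneg X hX)).1
  let ρ : Measure α := Measure.ofMeasurable (fun X _ => ENNReal.ofReal (f X).re)
    (by simp [hf_empty])
    (fun g hg hdisj => by
      have h := Complex.hasSum_re (hf_sum g hg hdisj)
      rw [← h.tsum_eq, ENNReal.ofReal_tsum_of_nonneg (fun i => hf_re _ (hg i)) h.summable])
  have hρ : ∀ X, MeasurableSet X → ρ X = ENNReal.ofReal (f X).re :=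
    fun X hX => Measure.ofMeasurable_apply X hX
  refine ⟨ρ, ⟨by simp [hρ]⟩, fun X hX => ?_⟩
  rw [measureReal_def, hρ X hX, ENNReal.toReal_ofReal (hf_re X hX)]
  exact Complex.eq_re_of_ofReal_le (r := 0) (by exact_mod_cast hf_nonneg X hX)

theorem exists_inner_apply_eq_sum_measureReal {α H : Type*} [MeasurableSpace α]
    [NormedAddCommGroup H] [InnerProductSpace ℂ H] (E : Set α → H →L[ℂ] H)
    (hpos : ∀ X, MeasurableSet X → (E X).IsPositive)
    (hadd : ∀ (ψ : H) (f : ℕ → Set α), (∀ i, MeasurableSet (f i)) →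
      Pairwise (Function.onFun Disjoint f) →
      HasSum (fun i => ⟪ψ, E (f i) ψ⟫_ℂ) ⟪ψ, E (⋃ i, f i) ψ⟫_ℂ)
    (x y : H) :
    ∃ (a : Fin 4 → ℂ) (ρ : Fin 4 → Measure α), (∀ k, IsFiniteMeasure (ρ k)) ∧
      ∀ X, MeasurableSet X → ⟪x, E X y⟫_ℂ = ∑ k, a k * (ρ k).real X := by
  let v : Fin 4 → H := ![x + y, x - y, x + Complex.I • y, x - Complex.I • y]
  choose ρ hρ_fin hρ using fun k => exists_isFiniteMeasure_eq_measureReal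
    (fun X => ⟪v k, E X (v k)⟫_ℂ) (fun X hX => (hpos X hX).inner_nonneg_right _) (hadd (v k))
  refine ⟨![1 / 4, -1 / 4, -Complex.I / 4, Complex.I / 4], ρ, hρ_fin, fun X hX => ?_⟩
  have hdiag : ∀ k, ⟪E X (v k), v k⟫_ℂ = (ρ k).real X := fun k =>
    ((hpos X hX).inner_left_eq_inner_right _ _).trans (hρ k X hX)
  rw [← (hpos X hX).inner_left_eq_inner_right, ← coe_coe,
    inner_map_polarization' (E X : H →ₗ[ℂ] H)]
  simp only [coe_coe, Fin.sum_univ_four]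
  rw [← hdiag 0, ← hdiag 1, ← hdiag 2, ← hdiag 3]
  simp only [v, Matrix.cons_val]
  ring

theorem HilbertBasis.adjoint_apply_eq_conj_smul {ι 𝕜 H : Type*} [RCLike 𝕜]
    [NormedAddCommGroup H] [InnerProductSpace 𝕜 H] [CompleteSpace H] (e : HilbertBasis ι 𝕜 H)
    {T : H →L[𝕜] H} {c : ι → 𝕜} (hT : ∀ i, T (e i) = c i • e i) (i : ι) :
    adjoint T (e i) = starRingEnd 𝕜 (c i) • e i := by
  classical
  refine e.repr.injective (lp.ext (funext fun j => ?_))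
  rw [e.repr_apply_apply, e.repr_apply_apply, adjoint_inner_right, hT, inner_smul_left,
    inner_smul_right, orthonormal_iff_ite.mp e.orthonormal]
  split_ifs with h <;> simp [h]

theorem HilbertBasis.inner_comp_adjoint_apply {ι 𝕜 H : Type*} [RCLike 𝕜]
    [NormedAddCommGroup H] [InnerProductSpace 𝕜 H] [CompleteSpace H] (e : HilbertBasis ι 𝕜 H)
    {T : H →L[𝕜] H} {c : ι → 𝕜} (hT : ∀ i, T (e i) = c i • e i) (A : H →L[𝕜] H) (i j : ι) :
    ⟪e i, (T ∘L A ∘L adjoint T) (e j)⟫_𝕜 = c i * starRingEnd 𝕜 (c j) * ⟪e i, A (e j)⟫_𝕜 := by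
  rw [comp_apply, ← adjoint_inner_left, comp_apply, e.adjoint_apply_eq_conj_smul hT,
    e.adjoint_apply_eq_conj_smul hT, inner_smul_left, map_smul, inner_smul_right, RCLike.conj_conj,
    mul_assoc]

theorem Circle.coe_pow_mul_conj_coe_pow (t : Circle) (m n : ℕ) :
    (t : ℂ) ^ m * starRingEnd ℂ ((t : ℂ) ^ n) = (t : ℂ) ^ ((m : ℤ) - n) := by
  rw [map_pow, ← Circle.coe_inv_eq_conj, Circle.coe_inv, inv_pow,
    zpow_sub₀ (Circle.coe_ne_zero t), zpow_natCast, zpow_natCast, div_eq_mul_inv]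

section Averaging

variable {G : Type*} [Group G] [MeasurableSpace G] [MeasurableMul₂ G]
  (μ ρ : Measure G) (χ : G →* Circle) {X : Set G}

theorem mul_measureReal_preimage_mul_left_eq_integral (hX : MeasurableSet X) (s : G) :
    (χ s : ℂ) * ρ.real ((s * ·) ⁻¹' X) =
      ∫ u, (χ u : ℂ)⁻¹ * X.indicator (fun t => (χ t : ℂ)) (s * u) ∂ρ := by
  have hρ : (ρ.real ((s * ·) ⁻¹' X) : ℂ) = ∫ u, ((s * ·) ⁻¹' X).indicator (fun _ => 1) u ∂ρ := by
    simp [integral_indicator_const _ (measurable_const_mul s hX)]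
  rw [hρ, ← integral_const_mul]
  refine integral_congr_ae (ae_of_all _ fun u => ?_)
  by_cases h : s * u ∈ X
  · simp only [Set.indicator_of_mem h, Set.indicator_of_mem (show u ∈ (s * ·) ⁻¹' X from h),
      mul_one, map_mul, Circle.coe_mul]
    field_simp [Circle.coe_ne_zero]
  · simp [Set.indicator_of_notMem h, Set.indicator_of_notMem (show u ∉ (s * ·) ⁻¹' X from h)]

variable [IsFiniteMeasure μ] [IsFiniteMeasure ρ]

theorem integrable_inv_mul_indicator_mul (hχ : Measurable fun g => (χ g : ℂ))
    (hX : MeasurableSet X) :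
    Integrable (Function.uncurry fun s u => (χ u : ℂ)⁻¹ * X.indicator (fun t => (χ t : ℂ)) (s * u))
      (μ.prod ρ) := by
  refine .of_bound (((hχ.comp measurable_snd).inv.mul
    ((hχ.indicator hX).comp measurable_mul)).aestronglyMeasurable) 1 (ae_of_all _ fun ⟨s, u⟩ => ?_)
  rw [Function.uncurry_apply_pair, norm_mul, norm_inv, Circle.norm_coe, inv_one, one_mul]
  exact (norm_indicator_le_norm_self _ _).trans_eq (Circle.norm_coe _)

theorem integrable_mul_measureReal_preimage_mul_left (hχ : Measurable fun g => (χ g : ℂ))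
    (hX : MeasurableSet X) :
    Integrable (fun s => (χ s : ℂ) * ρ.real ((s * ·) ⁻¹' X)) μ := by
  simp_rw [mul_measureReal_preimage_mul_left_eq_integral ρ χ hX]
  exact (integrable_inv_mul_indicator_mul μ ρ χ hχ hX).integral_prod_left

variable [μ.IsMulRightInvariant]

theorem integral_mul_measureReal_preimage_mul_left (hχ : Measurable fun g => (χ g : ℂ))
    (hX : MeasurableSet X) :
    ∫ s, (χ s : ℂ) * ρ.real ((s * ·) ⁻¹' X) ∂μ =
      (∫ u, (χ u : ℂ)⁻¹ ∂ρ) * ∫ t in X, (χ t : ℂ) ∂μ := by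
  have hinner : ∀ u, ∫ s, (χ u : ℂ)⁻¹ * X.indicator (fun t => (χ t : ℂ)) (s * u) ∂μ =
      (χ u : ℂ)⁻¹ * ∫ t in X, (χ t : ℂ) ∂μ := fun u => by
    rw [integral_const_mul, integral_mul_right_eq_self (X.indicator _) u, integral_indicator hX]
  simp_rw [mul_measureReal_preimage_mul_left_eq_integral ρ χ hX,
    integral_integral_swap (integrable_inv_mul_indicator_mul μ ρ χ hχ hX), hinner,
    integral_mul_const]

end Averaging

theorem exists_eq_mul_setIntegral_of_image_mul_left {G : Type*} [Group G] [MeasurableSpace G]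
    [MeasurableMul₂ G] (μ : Measure G) [IsProbabilityMeasure μ] [μ.IsMulRightInvariant]
    (χ : G →* Circle) {ι : Type*} [Fintype ι] (a : ι → ℂ) (ρ : ι → Measure G)
    [∀ i, IsFiniteMeasure (ρ i)]
    (hχ : Measurable fun g => (χ g : ℂ)) (ν : Set G → ℂ)
    (hν : ∀ X, MeasurableSet X → ν X = ∑ i, a i * (ρ i).real X)
    (hν_mul : ∀ s X, MeasurableSet X → ν ((s * ·) '' X) = χ s * ν X) :
    ∃ c : ℂ, ∀ X, MeasurableSet X → ν X = c * ∫ t in X, (χ t : ℂ) ∂μ := by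
  refine ⟨∑ i, a i * ∫ u, (χ u : ℂ)⁻¹ ∂ρ i, fun X hX => ?_⟩
  have hν_preimage : ∀ s, ν ((s * ·) ⁻¹' X) = (χ s : ℂ)⁻¹ * ν X := fun s => by
    rw [← inv_inv s, ← Set.image_mul_left, hν_mul _ _ hX, inv_inv, map_inv, Circle.coe_inv]
  have hν_avg : ν X = ∫ s, (χ s : ℂ) * ν ((s * ·) ⁻¹' X) ∂μ := by
    simp [hν_preimage, Circle.coe_ne_zero]
  calc ν X = ∫ s, ∑ i, a i * ((χ s : ℂ) * (ρ i).real ((s * ·) ⁻¹' X)) ∂μ := by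
        rw [hν_avg]
        refine integral_congr_ae (ae_of_all _ fun s => ?_)
        simp only [hν _ (measurable_const_mul s hX), Finset.mul_sum, mul_left_comm]
    _ = ∑ i, a i * ((∫ u, (χ u : ℂ)⁻¹ ∂ρ i) * ∫ t in X, (χ t : ℂ) ∂μ) := by
        rw [integral_finsetSum _ fun i _ =>
          (integrable_mul_measureReal_preimage_mul_left μ (ρ i) χ hχ hX).const_mul (a i)]
        simp_rw [integral_const_mul, integral_mul_measureReal_preimage_mul_left μ _ χ hχ hX]
    _ = _ := by rw [Finset.sum_mul]; simp_rw [mul_assoc]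

/-- Phase Theorem: a normalized POVM on the circle which is covariant
under the number representation `U(t)|n⟩ = tⁿ|n⟩` has matrix elements
`⟨m, E(X) n⟩ = c_{m,n} ∫_X t^{m−n} dt` with `c_{n,n} = 1`, where `dt` is the
normalized Haar measure on the circle. -/
theorem stmt18 [MeasurableSpace Circle] [BorelSpace Circle]
    (μ : Measure Circle) [μ.IsHaarMeasure] [IsProbabilityMeasure μ]
    {H : Type*} [NormedAddCommGroup H] [InnerProductSpace ℂ H] [CompleteSpace H]
    (e : HilbertBasis ℕ ℂ H)
    (U : Circle → H →L[ℂ] H)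
    (hU : ∀ (t : Circle) (n : ℕ), U t (e n) = ((t : ℂ) ^ n) • e n)
    (E : Set Circle → (H →L[ℂ] H))
    (hnorm : E Set.univ = 1)
    (hpos : ∀ X : Set Circle, MeasurableSet X → (E X).IsPositive)
    (hadd : ∀ (ψ : H) (f : ℕ → Set Circle), (∀ i, MeasurableSet (f i)) →
      Pairwise (Function.onFun Disjoint f) →
      HasSum (fun i => ⟪ψ, E (f i) ψ⟫_ℂ) ⟪ψ, E (⋃ i, f i) ψ⟫_ℂ)
    (hcov : ∀ (t : Circle) (X : Set Circle), MeasurableSet X →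
      U t ∘L E X ∘L (ContinuousLinearMap.adjoint (U t)) = E ((fun s => t * s) '' X)) :
    ∃ c : ℕ → ℕ → ℂ, (∀ n, c n n = 1) ∧
      ∀ (m n : ℕ) (X : Set Circle), MeasurableSet X →
        ⟪(e m : H), E X (e n)⟫_ℂ =
          c m n * ∫ t in X, ((t : ℂ) ^ ((m : ℤ) - (n : ℤ))) ∂μ := by
  have hc : ∀ m n : ℕ, ∃ c : ℂ, ∀ X, MeasurableSet X →
      ⟪(e m : H), E X (e n)⟫_ℂ = c * ∫ t in X, ((t : ℂ) ^ ((m : ℤ) - (n : ℤ))) ∂μ := by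
    intro m n
    obtain ⟨a, ρ, hρ_fin, hρ⟩ := exists_inner_apply_eq_sum_measureReal E hpos hadd (e m) (e n)
    have hχ : Measurable fun s : Circle => (s : ℂ) ^ ((m : ℤ) - n) :=
      ((show Continuous fun s : Circle => (s : ℂ) from continuous_subtype_val).zpow₀ _
        fun s => Or.inl (Circle.coe_ne_zero s)).measurable
    refine exists_eq_mul_setIntegral_of_image_mul_left μ (zpowGroupHom ((m : ℤ) - n)) a ρ hχ
      (fun X => ⟪(e m : H), E X (e n)⟫_ℂ) hρ fun t X hX => ?_
    rw [← hcov t X hX, e.inner_comp_adjoint_apply (hU t), Circle.coe_pow_mul_conj_coe_pow,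
      zpowGroupHom_apply, Circle.coe_zpow]
  choose c hc using hc
  refine ⟨c, fun n => ?_, hc⟩
  simpa [hnorm, e.orthonormal.1 n] using (hc n n Set.univ .univ).symm
end
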